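/- Let (X, ≤) be an inf-semilattice with a locally compact Hausdorff topology such that the meet (x, y) ↦ x ⊓ y is continuous from X × X to X, and assume that for all x ≤ y the order interval [x, y] = {z : x ≤ z ≤ y} is connected. Then the canonical map x ↦ x↓ = {z ∈ X : z ≤ x} is a topological embedding (a homeomorphism onto its image) of X into C(X) equipped with the Fell topology, and it is an order-embedding: x ≤ y if and only if x↓ ⊆ y↓. -/

import Mathlib

open Set Filter Topology TopologicalSpace

instance fellTopology (X : Type*) [TopologicalSpace X] : TopologicalSpace (Closeds X) :=
  TopologicalSpace.generateFrom
    ({S | ∃ O : Set X, IsOpen O ∧ S = {A : Closeds X | ((A : Set X) ∩ O).Nonempty}} ∪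
     {S | ∃ K : Set X, IsCompact K ∧ S = {A : Closeds X | (A : Set X) ∩ K = ∅}})

lemma isClosed_Iic_of_continuous_inf {X : Type*} [SemilatticeInf X] [TopologicalSpace X]
    [T2Space X] (hmeet : Continuous fun p : X × X => p.1 ⊓ p.2) (x : X) :
    IsClosed (Set.Iic x) := by
  have e : Set.Iic x = {z : X | z ⊓ x = z} := by ext z; simp [inf_eq_left]
  rw [e]
  exact isClosed_eq (hmeet.comp (continuous_id.prodMk continuous_const)) continuous_id

section Aux

variable {X : Type*} [SemilatticeInf X] [TopologicalSpace X] [T2Space X]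

omit [T2Space X] in
lemma isOpen_hit' (hmeet : Continuous fun p : X × X => p.1 ⊓ p.2) {O : Set X} (hO : IsOpen O) :
    IsOpen {y : X | (Set.Iic y ∩ O).Nonempty} := by
  rw [isOpen_iff_forall_mem_open]
  rintro y ⟨w, hwy, hwO⟩
  refine ⟨(fun y => w ⊓ y) ⁻¹' O, fun z hz => ⟨w ⊓ z, inf_le_right, hz⟩, ?_, ?_⟩
  · exact hO.preimage (hmeet.comp (continuous_const.prodMk continuous_id))
  · simpa [inf_eq_left.mpr hwy] using hwO

lemma isClosed_le_rel' (hmeet : Continuous fun p : X × X => p.1 ⊓ p.2) :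
    IsClosed {p : X × X | p.1 ≤ p.2} := by
  have e : {p : X × X | p.1 ≤ p.2} = {p : X × X | p.1 ⊓ p.2 = p.1} := by
    ext p; simp [inf_eq_left]
  rw [e]
  exact isClosed_eq hmeet continuous_fst

lemma isClosed_upper' (hmeet : Continuous fun p : X × X => p.1 ⊓ p.2) {K : Set X}
    (hK : IsCompact K) : IsClosed {y : X | ∃ z ∈ K, z ≤ y} := by
  have : CompactSpace K := isCompact_iff_compactSpace.mp hK
  have h1 : IsClosed {p : K × X | (p.1 : X) ≤ p.2} :=
    (isClosed_le_rel' hmeet).preimage ((continuous_subtype_val.comp continuous_fst).prodMk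
      continuous_snd)
  have h2 := isClosedMap_snd_of_compactSpace _ h1
  convert h2 using 1
  ext y
  constructor
  · rintro ⟨z, hzK, hzy⟩; exact ⟨(⟨z, hzK⟩, y), hzy, rfl⟩
  · rintro ⟨⟨z, y'⟩, h, rfl⟩; exact ⟨z, z.2, h⟩

/-- Separation: if `w ≤ x` and `w ≠ x`, there are open neighborhoods `O ∋ x`, `W ∋ w` such
that no point of `O` is below a point of `W`. -/
lemma sep_below (hmeet : Continuous fun p : X × X => p.1 ⊓ p.2) {x w : X}
    (hwx : w ≤ x) (hne : w ≠ x) :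
    ∃ O W : Set X, IsOpen O ∧ IsOpen W ∧ x ∈ O ∧ w ∈ W ∧
      ∀ z ∈ O, ∀ c ∈ W, ¬ z ≤ c := by
  obtain ⟨V, O', hV, hO', hwV, hxO', hd⟩ := t2_separation hne
  have hxw : x ⊓ w = w := inf_eq_right.mpr hwx
  have hmem : (fun p : X × X => p.1 ⊓ p.2) ⁻¹' V ∈ 𝓝 (x, w) := by
    have := (hmeet.tendsto (x, w)) (hV.mem_nhds (by simpa [hxw] using hwV))
    exact this
  rcases mem_nhds_prod_iff.mp hmem with ⟨O'', hO''n, W', hW'n, hsub⟩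
  rcases mem_nhds_iff.mp hO''n with ⟨O₂, hO₂sub, hO₂, hxO₂⟩
  rcases mem_nhds_iff.mp hW'n with ⟨W, hWsub, hW, hwW⟩
  refine ⟨O' ∩ O₂, W, hO'.inter hO₂, hW, ⟨hxO', hxO₂⟩, hwW, ?_⟩
  rintro z ⟨hzO', hzO₂⟩ c hcW hzc
  have : z ⊓ c ∈ V := hsub (Set.mk_mem_prod (hO₂sub hzO₂) (hWsub hcW))
  rw [inf_eq_left.mpr hzc] at this
  exact hd.ne_of_mem this hzO' rfl

end Aux

/-- Let `(X, ≤)` be a locally compact, order-connected Hausdorff topological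
∧-semilattice.  Then the canonical map `x ↦ x↓ = Iic x` is a topological embedding of `X` into
`C(X)` with the Fell topology, and an order-embedding: `x ≤ y ↔ Iic x ⊆ Iic y`. -/
theorem isEmbedding_principalIdeal_fell_of_semilattice
    {X : Type*} [SemilatticeInf X] [TopologicalSpace X] [T2Space X] [LocallyCompactSpace X]
    (hmeet : Continuous fun p : X × X => p.1 ⊓ p.2)
    (hconn : ∀ x y : X, x ≤ y → IsConnected (Set.Icc x y)) :
    IsEmbedding (fun x : X =>
      (⟨Set.Iic x, isClosed_Iic_of_continuous_inf hmeet x⟩ : Closeds X)) ∧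
    ∀ x y : X, x ≤ y ↔ Set.Iic x ⊆ Set.Iic y := by
  set f : X → Closeds X :=
    fun x => (⟨Set.Iic x, isClosed_Iic_of_continuous_inf hmeet x⟩ : Closeds X) with hf
  -- continuity of f
  have hcont : Continuous f := by
    apply continuous_generateFrom_iff.mpr
    rintro s (⟨O, hO, rfl⟩ | ⟨K, hK, rfl⟩)
    · exact isOpen_hit' hmeet hO
    · have e : f ⁻¹' {A : Closeds X | (A : Set X) ∩ K = ∅} = {y : X | ∃ z ∈ K, z ≤ y}ᶜ := by
        ext y
        simp only [hf, Set.mem_preimage, Set.mem_setOf_eq, Set.mem_compl_iff,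
          Set.eq_empty_iff_forall_notMem, Set.mem_inter_iff, Set.mem_Iic, not_exists]
        tauto
      rw [e]
      exact (isClosed_upper' hmeet hK).isOpen_compl
  constructor
  · refine ⟨isInducing_iff_nhds.mpr fun x => le_antisymm
      (Filter.map_le_iff_le_comap.mp (hcont.tendsto x)) ?_, fun a b h => ?_⟩
    · -- comap f (𝓝 (f x)) ≤ 𝓝 x
      intro U hU
      rcases mem_nhds_iff.mp hU with ⟨U', hU'sub, hU', hxU'⟩
      -- compact neighborhood inside U'
      rcases exists_compact_subset hU' hxU' with ⟨K, hK, hxK, hKU⟩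
      -- the compact "bad boundary" set
      set B : Set X := (K \ interior K) ∩ Set.Iic x with hB
      have hBcomp : IsCompact B :=
        (hK.diff isOpen_interior).inter_right (isClosed_Iic_of_continuous_inf hmeet x)
      have hsep : ∀ w ∈ B, ∃ OW : Set X × Set X, IsOpen OW.1 ∧ IsOpen OW.2 ∧
          x ∈ OW.1 ∧ OW.2 ∈ 𝓝 w ∧ ∀ z ∈ OW.1, ∀ c ∈ OW.2, ¬ z ≤ c := by
        intro w hw
        have hwx : w ≤ x := hw.2
        have hne : w ≠ x := by
          rintro rfl
          exact hw.1.2 hxK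
        obtain ⟨O, W, hO, hW, hxO, hwW, hsep⟩ := sep_below hmeet hwx hne
        exact ⟨(O, W), hO, hW, hxO, hW.mem_nhds hwW, hsep⟩
      choose F h1 h2 h3 h4 h5 using hsep
      obtain ⟨t, hcover⟩ := hBcomp.elim_nhds_subcover' (fun w hw => (F w hw).2)
        (fun w hw => h4 w hw)
      -- the open set O and compact set C
      set O : Set X := interior K ∩ ⋂ w ∈ t, (F w w.2).1 with hO
      have hOopen : IsOpen O :=
        isOpen_interior.inter (isOpen_biInter_finset fun w _ => h1 w w.2)
      have hxO : x ∈ O := ⟨hxK, Set.mem_biInter fun w _ => h3 w w.2⟩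
      set W : Set X := ⋃ w ∈ t, (F w w.2).2 with hW
      have hWopen : IsOpen W := isOpen_biUnion fun w _ => h2 w w.2
      set C : Set X := (K \ interior K) \ W with hC
      have hCcomp : IsCompact C := (hK.diff isOpen_interior).diff hWopen
      have hCx : Set.Iic x ∩ C = ∅ := by
        rw [Set.eq_empty_iff_forall_notMem]
        rintro c ⟨hcx, hcKint, hcW⟩
        exact hcW (hcover ⟨hcKint, hcx⟩)
      -- the Fell neighborhood
      refine Filter.mem_comap.mpr
        ⟨{A : Closeds X | ((A : Set X) ∩ O).Nonempty} ∩
          {A : Closeds X | (A : Set X) ∩ C = ∅}, ?_, ?_⟩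
      · apply IsOpen.mem_nhds
        · exact IsOpen.inter
            (isOpen_generateFrom_of_mem (Or.inl ⟨O, hOopen, rfl⟩))
            (isOpen_generateFrom_of_mem (Or.inr ⟨C, hCcomp, rfl⟩))
        · exact ⟨⟨x, le_rfl, hxO⟩, by simpa [hf] using hCx⟩
      · -- preimage is contained in U
        rintro y ⟨⟨z, hzy, hzO⟩, hyC⟩
        simp only [hf] at hzy hyC
        by_contra hyU
        have hyK : y ∉ K := fun h => hyU (hU'sub (hKU h))
        have hzy' : z ≤ y := hzy
        -- the interval [z, y] crosses the boundary of K
        have hcross : ∃ c, c ∈ Set.Icc z y ∩ (K \ interior K) := by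
          by_contra hno
          push_neg at hno
          have hIcc := (hconn z y hzy').isPreconnected
          have hsubuv : Set.Icc z y ⊆ interior K ∪ Kᶜ := by
            intro p hp
            by_cases hpK : p ∈ K
            · by_cases hpi : p ∈ interior K
              · exact Or.inl hpi
              · exact absurd ⟨hp, hpK, hpi⟩ (hno p)
            · exact Or.inr hpK
          have := hIcc (interior K) Kᶜ isOpen_interior hK.isClosed.isOpen_compl hsubuv
            ⟨z, ⟨le_rfl, hzy'⟩, hzO.1⟩ ⟨y, ⟨hzy', le_rfl⟩, hyK⟩
          rcases this with ⟨p, _, hpi, hpc⟩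
          exact hpc (interior_subset hpi)
        obtain ⟨c, hcIcc, hcKb⟩ := hcross
        have hcy : c ∈ Set.Iic y := hcIcc.2
        have hyC' : Set.Iic y ∩ C = ∅ := hyC
        have hcC : c ∉ C := fun hch =>
          (Set.eq_empty_iff_forall_notMem.mp hyC' c) ⟨hcy, hch⟩
        have hcW : c ∈ W := by
          by_contra hcw
          exact hcC ⟨hcKb, hcw⟩
        rcases Set.mem_iUnion₂.mp hcW with ⟨w, hwt, hcFw⟩
        exact h5 w w.2 z (Set.mem_iInter₂.mp hzO.2 w hwt) c hcFw hcIcc.1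
    · -- injective
      have h2 : Set.Iic a = Set.Iic b := congrArg (fun A : Closeds X => (A : Set X)) h
      exact le_antisymm (Set.Iic_subset_Iic.mp h2.le) (Set.Iic_subset_Iic.mp h2.ge)
  · exact fun x y => Set.Iic_subset_Iic.symm
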